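/- The 1-form ω = L₁ dK₁ + L₂ dK₂ on ℝ² is closed, i.e., ∂L₁/∂K₂ = ∂L₂/∂K₁, for total geodesic curvatures of a spherical bigon. -/

import Mathlib

/-! At `K = ln cot r'` the derivative of `L` for the arc of radius `r` is
`-2 cos r cos r' sin r sin r' sin θ / Q(r, r')`. Clearing `sin² r'` and using `sin² + cos² = 1`
turns the denominator into a `Q` that is symmetric in `r, r'`, so both partial derivatives
are the same expression. -/

open Real Set

/-- The inverse cotangent, valued in `(0, π)`. -/
noncomputable def arccot (x : ℝ) : ℝ := π / 2 - Real.arctan x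

theorem hasDerivAt_arccot (x : ℝ) : HasDerivAt arccot (-(1 / (1 + x ^ 2))) x :=
  (hasDerivAt_arctan x).const_sub (π / 2)

/-- `Lᵢ` for the arc of radius `r`, as a function of the parameter `K` of the *other* arc. -/
noncomputable def totalGeodesicCurvature (r θ : ℝ) (K : ℝ) : ℝ :=
  Real.cot r * (2 * arccot ((Real.exp K * Real.sin r + Real.cos r * Real.cos θ) / Real.sin θ)
    * Real.sin r)

theorem hasDerivAt_totalGeodesicCurvature {r θ : ℝ} (hr : sin r ≠ 0) (hθ : sin θ ≠ 0) (K : ℝ) :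
    HasDerivAt (totalGeodesicCurvature r θ)
      (-2 * cos r * sin r * exp K * sin θ / (sin θ ^ 2 + (exp K * sin r + cos r * cos θ) ^ 2))
      K := by
  have hinner : HasDerivAt (fun K => (exp K * sin r + cos r * cos θ) / sin θ)
      (exp K * sin r / sin θ) K :=
    (((hasDerivAt_exp K).mul_const _).add_const _).div_const _
  refine ((((hasDerivAt_arccot _).comp K hinner).const_mul 2).mul_const (sin r)
    |>.const_mul (cot r)).congr_deriv ?_
  rw [cot_eq_cos_div_sin]
  field_simp

theorem sq_sin_mul_add_sq_eq {r r' θ : ℝ} (hr' : sin r' ≠ 0) :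
    sin r' ^ 2 * (sin θ ^ 2 + (cos r' / sin r' * sin r + cos r * cos θ) ^ 2) =
      cos r ^ 2 * sin r' ^ 2 + cos r' ^ 2 * sin r ^ 2
        + 2 * cos r * cos r' * sin r * sin r' * cos θ + sin r ^ 2 * sin r' ^ 2 * sin θ ^ 2 := by
  field_simp
  linear_combination sin r' ^ 2 * (-sin θ ^ 2 * sin_sq_add_cos_sq r
    + cos r ^ 2 * sin_sq_add_cos_sq θ)

theorem deriv_totalGeodesicCurvature_log_cot {r r' θ : ℝ}
    (hr : r ∈ Ioo 0 (π / 2)) (hr' : r' ∈ Ioo 0 (π / 2)) (hθ : sin θ ≠ 0) :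
    deriv (totalGeodesicCurvature r θ) (log (cot r')) =
      -2 * cos r * cos r' * sin r * sin r' * sin θ /
        (cos r ^ 2 * sin r' ^ 2 + cos r' ^ 2 * sin r ^ 2
          + 2 * cos r * cos r' * sin r * sin r' * cos θ + sin r ^ 2 * sin r' ^ 2 * sin θ ^ 2) := by
  have hsin : 0 < sin r := sin_pos_of_pos_of_lt_pi hr.1 (by linarith [hr.2, pi_pos])
  have hsin' : 0 < sin r' := sin_pos_of_pos_of_lt_pi hr'.1 (by linarith [hr'.2, pi_pos])
  have hcos' : 0 < cos r' := cos_pos_of_mem_Ioo ⟨by linarith [hr'.1, pi_pos], hr'.2⟩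
  have hcot' : 0 < cot r' := by rw [cot_eq_cos_div_sin]; positivity
  rw [(hasDerivAt_totalGeodesicCurvature hsin.ne' hθ _).deriv, exp_log hcot',
    cot_eq_cos_div_sin, ← sq_sin_mul_add_sq_eq hsin'.ne']
  have hden : sin θ ^ 2 + (cos r' / sin r' * sin r + cos r * cos θ) ^ 2 ≠ 0 := by positivity
  field_simp

/-- The 1-form `ω = L₁ dK₁ + L₂ dK₂` is closed: `∂L₁/∂K₂ = ∂L₂/∂K₁`, where
`Lᵢ = cot rᵢ · 2βᵢ sin rᵢ` are the total geodesic curvatures of a spherical bigon,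
parametrized by `Kᵢ = ln (cot rᵢ)`, with intersection angle `θ` fixed. -/
theorem one_form_closed (r₁ r₂ θ : ℝ)
    (hr₁ : r₁ ∈ Ioo 0 (π / 2)) (hr₂ : r₂ ∈ Ioo 0 (π / 2)) (hθ : θ ∈ Ioc 0 (π / 2))
    (L₁ L₂ : ℝ → ℝ)
    -- L₁ as a function of K₂ (with r₁ fixed):
    (hL₁ : ∀ K : ℝ, L₁ K = Real.cot r₁ *
      (2 * arccot ((Real.exp K * Real.sin r₁ + Real.cos r₁ * Real.cos θ) / Real.sin θ)
        * Real.sin r₁))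
    -- L₂ as a function of K₁ (with r₂ fixed):
    (hL₂ : ∀ K : ℝ, L₂ K = Real.cot r₂ *
      (2 * arccot ((Real.exp K * Real.sin r₂ + Real.cos r₂ * Real.cos θ) / Real.sin θ)
        * Real.sin r₂)) :
    deriv L₁ (Real.log (Real.cot r₂)) = deriv L₂ (Real.log (Real.cot r₁)) := by
  have hsinθ : sin θ ≠ 0 :=
    (sin_pos_of_pos_of_lt_pi hθ.1 (by linarith [hθ.2, pi_pos])).ne'
  rw [show L₁ = totalGeodesicCurvature r₁ θ from funext hL₁,
    show L₂ = totalGeodesicCurvature r₂ θ from funext hL₂,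
    deriv_totalGeodesicCurvature_log_cot hr₁ hr₂ hsinθ,
    deriv_totalGeodesicCurvature_log_cot hr₂ hr₁ hsinθ]
  ring
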